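/- Let r : A → B be a homomorphism of abelian groups such that r ⊗ ℚ is surjective and r ⊗ ℚ/ℤ is injective. Then r ⊗ ℚ/ℤ is an isomorphism. -/

import Mathlib

open TensorProduct

/-! With `π : ℚ → ℚ/ℤ` the quotient map, `(r ⊗ ℚ/ℤ) ∘ (A ⊗ π) = (B ⊗ π) ∘ (r ⊗ ℚ)` is a composite
of surjections, since tensoring preserves surjectivity; hence `r ⊗ ℚ/ℤ` is surjective. -/

theorem LinearMap.rTensor_surjective_of_rTensor_surjective {R M N P Q : Type*} [CommSemiring R]
    [AddCommMonoid M] [AddCommMonoid N] [AddCommMonoid P] [AddCommMonoid Q]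
    [Module R M] [Module R N] [Module R P] [Module R Q]
    (f : M →ₗ[R] N) {g : P →ₗ[R] Q} (hg : Function.Surjective g)
    (hf : Function.Surjective (f.rTensor P)) : Function.Surjective (f.rTensor Q) := by
  have hcomp : Function.Surjective (f.rTensor Q ∘ g.lTensor M) := by
    rw [← coe_comp, rTensor_comp_lTensor, ← lTensor_comp_rTensor]
    exact (lTensor_surjective N hg).comp hf
  exact hcomp.of_comp

/-- If `r : A → B` is a homomorphism of abelian groups such that `r ⊗ ℚ` is surjective and
`r ⊗ ℚ/ℤ` is injective, then `r ⊗ ℚ/ℤ` is an isomorphism (i.e. bijective). -/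
theorem stmt_2 (A B : Type) [AddCommGroup A] [AddCommGroup B] (r : A →+ B)
    (hQ : Function.Surjective (LinearMap.rTensor ℚ r.toIntLinearMap))
    (hQZ : Function.Injective
      (LinearMap.rTensor (ℚ ⧸ AddSubgroup.zmultiples (1 : ℚ)) r.toIntLinearMap)) :
    Function.Bijective
      (LinearMap.rTensor (ℚ ⧸ AddSubgroup.zmultiples (1 : ℚ)) r.toIntLinearMap) :=
  ⟨hQZ, r.toIntLinearMap.rTensor_surjective_of_rTensor_surjective
    (g := (QuotientAddGroup.mk' _).toIntLinearMap) (QuotientAddGroup.mk'_surjective _) hQ⟩
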